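/- arXiv:2210.01898 — 2 statements merged into one kernel-verified Lean document; each statement's English description precedes it below -/
import Mathlib

section
/- Let X, Y be real random variables and let Ū be uniformly distributed on [U/2, U] for some U > 0, independent of X and Y. Suppose |X − X'| ≤ 2ε and |Y − Y'| ≤ 2ε for reals X', Y' and some ε > 0. Then the probability that the indicator of the event {X + ε̃ < Y − Ū} differs from the indicator of {X' + ε̃ < Y' − Ū} is at most 8ε/ (U/2) = 16 ε / U, where ε̃ is any fixed real. -/
open MeasureTheory

/-- The uniform probability measure on the interval `[U/2, U]`. -/
noncomputable def uniformOnIcc (U : ℝ) : Measure ℝ :=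
  (ENNReal.ofReal (2 / U)) • (volume.restrict (Set.Icc (U / 2) U))

/-!
Each decision compares `u` with a threshold, `Y - X - εtilde` or `Y' - X' - εtilde`. The two
decisions can differ only for `u` between the thresholds, which are at most `4ε` apart, and the
uniform law has density `2 / U`.
-/

open Set

lemma setOf_not_lt_iff_lt_subset_uIcc {α : Type*} [LinearOrder α] (a b : α) :
    {u : α | ¬(u < a ↔ u < b)} ⊆ uIcc a b := by
  intro u hu
  rw [mem_ofPred_eq, not_iff] at hu
  rw [mem_uIcc]
  rcases lt_or_ge u a with hua | hau
  · exact Or.inr ⟨not_lt.mp fun hub => hu.mpr hub hua, hua.le⟩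
  · exact Or.inl ⟨hau, (hu.mp (not_lt.mpr hau)).le⟩

lemma uniformOnIcc_le_ofReal_mul_volume (U : ℝ) (s : Set ℝ) :
    uniformOnIcc U s ≤ ENNReal.ofReal (2 / U) * volume s := by
  rw [uniformOnIcc, Measure.smul_apply, smul_eq_mul]
  gcongr
  exact Measure.restrict_le_self

lemma uniformOnIcc_uIcc_le {U : ℝ} (hU : 0 ≤ U) (a b : ℝ) :
    uniformOnIcc U (uIcc a b) ≤ ENNReal.ofReal (2 * |b - a| / U) := by
  calc uniformOnIcc U (uIcc a b) ≤ ENNReal.ofReal (2 / U) * ENNReal.ofReal |b - a| := by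
        rw [← Real.volume_interval]
        exact uniformOnIcc_le_ofReal_mul_volume U _
    _ = ENNReal.ofReal (2 * |b - a| / U) := by
        rw [← ENNReal.ofReal_mul (by positivity), div_mul_eq_mul_div]

theorem stmt_4_general (U ε εtilde X Y X' Y' : ℝ) (hU : 0 < U)
    (hX : |X - X'| ≤ 2 * ε) (hY : |Y - Y'| ≤ 2 * ε) :
    uniformOnIcc U {u : ℝ | ¬((X + εtilde < Y - u) ↔ (X' + εtilde < Y' - u))}
      ≤ ENNReal.ofReal (16 * ε / U) := by
  have hthreshold (X Y u : ℝ) : X + εtilde < Y - u ↔ u < Y - X - εtilde := by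
    constructor <;> intro <;> linarith
  simp only [hthreshold]
  have hgap : |(Y' - X' - εtilde) - (Y - X - εtilde)| ≤ 4 * ε := by
    rw [abs_le] at hX hY ⊢
    constructor <;> linarith
  have hε : 0 ≤ ε := by linarith [abs_nonneg (X - X')]
  calc _ ≤ uniformOnIcc U (uIcc (Y - X - εtilde) (Y' - X' - εtilde)) :=
        measure_mono (setOf_not_lt_iff_lt_subset_uIcc _ _)
    _ ≤ ENNReal.ofReal (2 * |(Y' - X' - εtilde) - (Y - X - εtilde)| / U) :=
        uniformOnIcc_uIcc_le hU.le _ _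
    _ ≤ ENNReal.ofReal (16 * ε / U) :=
        ENNReal.ofReal_le_ofReal (div_le_div_of_nonneg_right (by linarith) hU.le)

theorem stmt_4 (U ε εtilde X Y X' Y' : ℝ) (hU : 0 < U) (hε : 0 < ε)
    (hX : |X - X'| ≤ 2 * ε) (hY : |Y - Y'| ≤ 2 * ε) :
    uniformOnIcc U {u : ℝ | ¬((X + εtilde < Y - u) ↔ (X' + εtilde < Y' - u))}
      ≤ ENNReal.ofReal (16 * ε / U) :=
  stmt_4_general U ε εtilde X Y X' Y' hU hX hY
end

section
/- Let π be a 4-approximate G-optimal design on a finite core set C ⊂ R^d for action set A, i.e., sup_{a'∈A} ‖a'‖²_{V(π)^{-1}} ≤ 4d where V(π) = ∑_{a∈C} π(a) a aᵀ is invertible. Then for every a' ∈ A: |⟨a', V(π)^{-1} ∑_{a∈C} π(a) a⟩| ≤ 4d + 1. -/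
open Finset Matrix

/-- Design matrix `V(π) = ∑_{a ∈ C} π(a) a aᵀ`. -/
noncomputable def designMatrix {d : ℕ} (C : Finset (Fin d → ℝ)) (π : (Fin d → ℝ) → ℝ) :
    Matrix (Fin d) (Fin d) ℝ :=
  ∑ a ∈ C, π a • Matrix.vecMulVec a a

/-- `‖v‖²_M = vᵀ M v`. -/
noncomputable def matNormSq {d : ℕ} (M : Matrix (Fin d) (Fin d) ℝ) (v : Fin d → ℝ) : ℝ :=
  v ⬝ᵥ M.mulVec v

lemma aux_dot_sum {d : ℕ} {ι : Type*} (s : Finset ι) (v : Fin d → ℝ) (f : ι → Fin d → ℝ) :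
    v ⬝ᵥ (∑ a ∈ s, f a) = ∑ a ∈ s, v ⬝ᵥ f a := by
  simp only [dotProduct, Finset.sum_apply, Finset.mul_sum]
  exact Finset.sum_comm

lemma aux_sum_mv {d : ℕ} {ι : Type*} (s : Finset ι) (M : ι → Matrix (Fin d) (Fin d) ℝ)
    (c : Fin d → ℝ) : (∑ a ∈ s, M a) *ᵥ c = ∑ a ∈ s, (M a) *ᵥ c := by
  funext i
  simp only [Matrix.mulVec, dotProduct, Finset.sum_apply, Matrix.sum_apply, Finset.sum_mul]
  exact Finset.sum_comm

lemma aux_vmv {d : ℕ} (a c : Fin d → ℝ) :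
    (Matrix.vecMulVec a a).mulVec c = (a ⬝ᵥ c) • a := by
  funext i
  simp [Matrix.mulVec, Matrix.vecMulVec_apply, dotProduct, Finset.mul_sum, mul_comm, mul_assoc, mul_left_comm]

theorem stmt_14 (d : ℕ) (A : Set (Fin d → ℝ)) (C : Finset (Fin d → ℝ))
    (π : (Fin d → ℝ) → ℝ) (hπ0 : ∀ a ∈ C, 0 ≤ π a) (hπ1 : ∑ a ∈ C, π a = 1)
    (hV : IsUnit (designMatrix C π).det)
    (hdesign : ∀ a' ∈ A, matNormSq (designMatrix C π)⁻¹ a' ≤ 4 * d) :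
    ∀ a' ∈ A,
      |a' ⬝ᵥ (designMatrix C π)⁻¹.mulVec (∑ a ∈ C, π a • a)| ≤ 4 * d + 1 := by
  intro a' ha'
  set V := designMatrix C π with hVdef
  set W := V⁻¹ with hWdef
  have hVsymm : Vᵀ = V := by
    rw [hVdef, designMatrix, Matrix.transpose_sum]
    refine Finset.sum_congr rfl fun a _ => ?_
    rw [Matrix.transpose_smul]
    congr 1
    ext i j
    simp [Matrix.vecMulVec_apply, mul_comm]
  have hWsymm : Wᵀ = W := by
    rw [hWdef, Matrix.transpose_nonsing_inv, hVsymm]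
  set c := W.mulVec a' with hcdef
  -- rewrite LHS
  have h1 : a' ⬝ᵥ W.mulVec (∑ a ∈ C, π a • a) = ∑ a ∈ C, π a * (c ⬝ᵥ a) := by
    rw [Matrix.dotProduct_mulVec, ← Matrix.mulVec_transpose, hWsymm, ← hcdef]
    rw [aux_dot_sum]
    exact Finset.sum_congr rfl fun a _ => by rw [dotProduct_smul, smul_eq_mul]
  -- quadratic sum equals matNormSq
  have h2 : ∑ a ∈ C, π a * (c ⬝ᵥ a) ^ 2 = matNormSq W a' := by
    have hVc : V.mulVec c = ∑ a ∈ C, (π a * (a ⬝ᵥ c)) • a := by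
      rw [hVdef, designMatrix, aux_sum_mv]
      refine Finset.sum_congr rfl fun a _ => ?_
      rw [Matrix.smul_mulVec, aux_vmv, smul_smul]
    have hcVc : c ⬝ᵥ V.mulVec c = ∑ a ∈ C, π a * (c ⬝ᵥ a) ^ 2 := by
      rw [hVc, aux_dot_sum]
      refine Finset.sum_congr rfl fun a _ => ?_
      rw [dotProduct_smul, dotProduct_comm a c, smul_eq_mul]
      ring
    have hWVW : W * V * W = W := by
      rw [hWdef, Matrix.nonsing_inv_mul V hV, Matrix.one_mul]
    have hVcval : V.mulVec c = a' := by
      rw [hcdef, Matrix.mulVec_mulVec, Matrix.mul_nonsing_inv V hV, Matrix.one_mulVec]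
    have : c ⬝ᵥ V.mulVec c = matNormSq W a' := by
      rw [hVcval, dotProduct_comm, matNormSq, hcdef]
    rw [← hcVc, this]
  rw [h1]
  calc |∑ a ∈ C, π a * (c ⬝ᵥ a)|
      ≤ ∑ a ∈ C, |π a * (c ⬝ᵥ a)| := Finset.abs_sum_le_sum_abs _ _
    _ ≤ ∑ a ∈ C, π a * (1 + (c ⬝ᵥ a) ^ 2) := by
        refine Finset.sum_le_sum fun a ha => ?_
        rw [abs_mul, abs_of_nonneg (hπ0 a ha)]
        refine mul_le_mul_of_nonneg_left ?_ (hπ0 a ha)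
        nlinarith [abs_nonneg (c ⬝ᵥ a), sq_abs (c ⬝ᵥ a), sq_nonneg (|c ⬝ᵥ a| - 1)]
    _ = 1 + ∑ a ∈ C, π a * (c ⬝ᵥ a) ^ 2 := by
        simp only [mul_add, Finset.sum_add_distrib, mul_one, hπ1]
    _ ≤ 1 + 4 * d := by rw [h2]; linarith [hdesign a' ha']
    _ = 4 * d + 1 := by ring
end
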